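/- arXiv:2104.13651 — 3 statements merged into one kernel-verified Lean document; each statement's English description precedes it below -/
import Mathlib

section
/- The AGL_1(ℂ)-representation variety of the (m,n)-torus knot is isomorphic to the set {(t, α, β) ∈ ℂ* × ℂ² : Φ_n(t^m)·α = Φ_m(t^n)·β}, via sending (t,α,β) to the pair of affine maps (x ↦ t^m x + α, x ↦ t^n x + β). -/
/-!
Every affine automorphism of `ℂ` is `x ↦ a x + α` for a unique `(a, α) ∈ ℂˣ × ℂ`, and
`(x ↦ a x + α)^k = (x ↦ a^k x + Φ_k(a) α)`. So `A^n = B^m` for `A = (a, α)`, `B = (b, β)` means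
`a^n = b^m` and `Φ_n(a) α = Φ_m(b) β`. Since `m, n` are coprime, a Bézout identity
`u m + v n = 1` shows that `t ↦ (t^m, t^n)` maps `ℂˣ` bijectively onto `{(a, b) : a^n = b^m}`,
with inverse `(a, b) ↦ a^u b^v`.
-/

/-- The affine automorphism `x ↦ a • x + α` of `ℂ`. -/
noncomputable def affMap (a : ℂˣ) (α : ℂ) : ℂ ≃ᵃ[ℂ] ℂ :=
  (LinearEquiv.smulOfUnit a).toAffineEquiv.trans
    (AffineEquiv.constVAdd ℂ ℂ α)

section CoprimePowers

variable {G : Type*} {m n : ℕ}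

theorem eq_of_pow_eq_of_pow_eq_of_coprime [Group G] (h : m.Coprime n) {t s : G}
    (hm : t ^ m = s ^ m) (hn : t ^ n = s ^ n) : t = s := by
  obtain ⟨u, v, huv⟩ : IsCoprime (m : ℤ) n := Int.isCoprime_iff_gcd_eq_one.mpr h
  have bezout (w : G) : w = (w ^ m) ^ u * (w ^ n) ^ v := by
    rw [← zpow_natCast, ← zpow_natCast, ← zpow_mul, ← zpow_mul, ← zpow_add, mul_comm (m : ℤ),
      mul_comm (n : ℤ), huv, zpow_one]
  rw [bezout t, bezout s, hm, hn]

theorem exists_pow_eq_pow_eq_of_coprime [CommGroup G] (h : m.Coprime n) {a b : G}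
    (hab : a ^ n = b ^ m) : ∃ t : G, t ^ m = a ∧ t ^ n = b := by
  obtain ⟨u, v, huv⟩ : IsCoprime (m : ℤ) n := Int.isCoprime_iff_gcd_eq_one.mpr h
  have hab' : a ^ (n : ℤ) = b ^ (m : ℤ) := by simpa only [zpow_natCast] using hab
  refine ⟨a ^ u * b ^ v, ?_, ?_⟩
  · rw [← zpow_natCast, mul_zpow, ← zpow_mul, ← zpow_mul, mul_comm v, zpow_mul b, ← hab',
      ← zpow_mul, ← zpow_add, show u * m + n * v = 1 by linarith, zpow_one]
  · rw [← zpow_natCast, mul_zpow, ← zpow_mul, ← zpow_mul, mul_comm u, zpow_mul a, hab',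
      ← zpow_mul, ← zpow_add, show m * u + v * n = 1 by linarith, zpow_one]

end CoprimePowers

lemma affMap_apply (a : ℂˣ) (α x : ℂ) : affMap a α x = α + a * x := rfl

lemma affMap_one : affMap 1 0 = 1 := by
  ext x; simp [affMap_apply]

lemma affMap_mul (a b : ℂˣ) (α β : ℂ) :
    affMap a α * affMap b β = affMap (a * b) (α + a * β) := by
  ext x
  change affMap a α (affMap b β x) = _
  simp only [affMap_apply, Units.val_mul]
  ring

open Finset in
lemma affMap_pow (a : ℂˣ) (α : ℂ) (k : ℕ) :
    affMap a α ^ k = affMap (a ^ k) ((∑ i ∈ range k, (a : ℂ) ^ i) * α) := by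
  induction k with
  | zero => simp [affMap_one]
  | succ k ih =>
    rw [pow_succ, ih, affMap_mul, geom_sum_succ', pow_succ]
    push_cast
    congr 1
    ring

lemma affMap_inj {a b : ℂˣ} {α β : ℂ} : affMap a α = affMap b β ↔ a = b ∧ α = β := by
  refine ⟨fun h => ?_, by rintro ⟨rfl, rfl⟩; rfl⟩
  have h0 := congr($h 0)
  have h1 := congr($h 1)
  simp only [affMap_apply, mul_zero, add_zero, mul_one] at h0 h1
  exact ⟨Units.ext (by simpa [h0] using h1), h0⟩

lemma exists_affMap_eq (e : ℂ ≃ᵃ[ℂ] ℂ) : ∃ a α, affMap a α = e := by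
  refine ⟨Units.mk0 (e.linear 1) (by simp), e 0, AffineEquiv.ext fun x => ?_⟩
  have hlin : e.linear x = x * e.linear 1 := by simpa using e.linear.map_smul x 1
  have hdecomp : e x = e.linear x + e 0 := by simpa using e.map_vadd 0 x
  rw [affMap_apply, hdecomp, hlin, Units.val_mk0]
  ring

open Finset in
lemma affMap_pow_eq_affMap_pow_iff (t : ℂˣ) (α β : ℂ) (m n : ℕ) :
    affMap (t ^ m) α ^ n = affMap (t ^ n) β ^ m ↔
      (∑ i ∈ range n, ((t : ℂ) ^ m) ^ i) * α = (∑ i ∈ range m, ((t : ℂ) ^ n) ^ i) * β := by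
  rw [affMap_pow, affMap_pow, affMap_inj, ← pow_mul, ← pow_mul, mul_comm m n]
  push_cast
  exact and_iff_right rfl

open Finset in
theorem agl1_rep_variety_description_general (m n : ℕ)
    (h : Nat.Coprime m n) :
    ∃ F : {p : ℂˣ × ℂ × ℂ //
            (∑ i ∈ range n, ((p.1 : ℂ) ^ m) ^ i) * p.2.1
              = (∑ i ∈ range m, ((p.1 : ℂ) ^ n) ^ i) * p.2.2} ≃
          {AB : (ℂ ≃ᵃ[ℂ] ℂ) × (ℂ ≃ᵃ[ℂ] ℂ) // AB.1 ^ n = AB.2 ^ m},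
      ∀ p, (F p).val = (affMap (p.val.1 ^ m) p.val.2.1, affMap (p.val.1 ^ n) p.val.2.2) := by
  refine ⟨Equiv.ofBijective (fun p => ⟨(affMap (p.1.1 ^ m) p.1.2.1, affMap (p.1.1 ^ n) p.1.2.2),
    (affMap_pow_eq_affMap_pow_iff _ _ _ m n).2 p.2⟩) ⟨?_, ?_⟩, fun _ => rfl⟩
  · rintro ⟨⟨t, α, β⟩, _⟩ ⟨⟨s, γ, δ⟩, _⟩ hpq
    simp only [Subtype.mk.injEq, Prod.mk.injEq, affMap_inj] at hpq
    obtain ⟨⟨htm, rfl⟩, htn, rfl⟩ := hpq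
    obtain rfl := eq_of_pow_eq_of_pow_eq_of_coprime h htm htn
    rfl
  · rintro ⟨⟨A, B⟩, hAB⟩
    obtain ⟨a, α, rfl⟩ := exists_affMap_eq A
    obtain ⟨b, β, rfl⟩ := exists_affMap_eq B
    have hab : a ^ n = b ^ m := by
      rw [affMap_pow, affMap_pow] at hAB
      exact (affMap_inj.1 hAB).1
    obtain ⟨t, rfl, rfl⟩ := exists_pow_eq_pow_eq_of_coprime h hab
    exact ⟨⟨(t, α, β), (affMap_pow_eq_affMap_pow_iff t α β m n).1 hAB⟩, rfl⟩

open Finset in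
theorem agl1_rep_variety_description (m n : ℕ) (hm : 0 < m) (hn : 0 < n)
    (h : Nat.Coprime m n) :
    ∃ F : {p : ℂˣ × ℂ × ℂ //
            (∑ i ∈ range n, ((p.1 : ℂ) ^ m) ^ i) * p.2.1
              = (∑ i ∈ range m, ((p.1 : ℂ) ^ n) ^ i) * p.2.2} ≃
          {AB : (ℂ ≃ᵃ[ℂ] ℂ) × (ℂ ≃ᵃ[ℂ] ℂ) // AB.1 ^ n = AB.2 ^ m},
      ∀ p, (F p).val = (affMap (p.val.1 ^ m) p.val.2.1, affMap (p.val.1 ^ n) p.val.2.2) :=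
  agl1_rep_variety_description_general m n h
end

section
/- The E-polynomial (equivalently, the class in the Grothendieck ring generated by the Lefschetz motive q) of the AGL_1(ℂ)-representation variety {(t,α,β) ∈ ℂ* × ℂ² : Φ_n(t^m)α = Φ_m(t^n)β} equals (mn - m - n + 2)(q² - q); concretely, counting points over a finite field 𝔽_q containing all mn-th roots of unity, the number of solutions is (mn - m - n + 2)(q² - q). -/
/-!
Fibre over `t`: the pairs `(α, β)` with `Φ_n(t^m) α = Φ_m(t^n) β` form a line (`q` points) unless
both coefficients vanish, in which case they form the whole plane (`q²` points). Since
`Φ_k(x) (x - 1) = x^k - 1` and `k ≠ 0` in `𝔽_q`, both coefficients vanish exactly when `t` is an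
`mn`-th root of unity that is neither an `m`-th nor an `n`-th one. All these roots lie in `𝔽_q`, and
coprimality makes `μ_m ∩ μ_n = {1}`, so there are `mn - m - n + 1` such `t`. Hence the count is
`(q - 1) q + (mn - m - n + 1)(q² - q)`.
-/

open Finset Polynomial

section LinearEquation

variable {F : Type*} [Field F]

lemma natCard_mul_eq_mul_of_right_ne_zero {a b : F} (hb : b ≠ 0) :
    Nat.card {p : F × F // a * p.1 = b * p.2} = Nat.card F :=
  Nat.card_congr
    { toFun := fun x => x.1.1
      invFun := fun x => ⟨(x, b⁻¹ * (a * x)), by field_simp⟩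
      left_inv := fun x => Subtype.ext <| Prod.ext rfl <| by
        show b⁻¹ * (a * x.1.1) = x.1.2
        rw [x.2, inv_mul_cancel_left₀ hb]
      right_inv := fun _ => rfl }

lemma natCard_mul_eq_mul [DecidableEq F] (a b : F) :
    Nat.card {p : F × F // a * p.1 = b * p.2}
      = if a = 0 ∧ b = 0 then Nat.card F ^ 2 else Nat.card F := by
  by_cases hb : b = 0
  · by_cases ha : a = 0
    · subst ha hb
      simp [sq]
    · rw [if_neg (fun h => ha h.1), ← natCard_mul_eq_mul_of_right_ne_zero (a := b) ha]
      exact Nat.card_congr ((Equiv.prodComm F F).subtypeEquiv fun p => eq_comm)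
  · rw [if_neg (fun h => hb h.2), natCard_mul_eq_mul_of_right_ne_zero hb]

variable [Fintype F] [DecidableEq F]

lemma natCard_nonzero_linear_family (a b : F → F) :
    (Nat.card {p : F × F × F // p.1 ≠ 0 ∧ a p.1 * p.2.1 = b p.1 * p.2.2} : ℤ)
      = ((Fintype.card F : ℤ) - 1) * Fintype.card F
        + #{t | t ≠ 0 ∧ a t = 0 ∧ b t = 0} * ((Fintype.card F : ℤ) ^ 2 - Fintype.card F) := by
  set q : ℤ := (Fintype.card F : ℤ)
  have fiber (t : F) : (Nat.card {x : F × F // t ≠ 0 ∧ a t * x.1 = b t * x.2} : ℤ)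
      = (if t ≠ 0 then q else 0) + (if t ≠ 0 ∧ a t = 0 ∧ b t = 0 then q ^ 2 - q else 0) := by
    by_cases ht : t = 0
    · simp [ht]
    · simp only [ne_eq, ht, not_false_eq_true, true_and, if_true]
      rw [natCard_mul_eq_mul, Nat.card_eq_fintype_card]
      split_ifs <;> push_cast <;> ring
  rw [Nat.card_congr (Equiv.subtypeProdEquivSigmaSubtype
      fun t (x : F × F) => t ≠ 0 ∧ a t * x.1 = b t * x.2), Nat.card_sigma, Nat.cast_sum]
  simp only [fiber, sum_add_distrib, sum_ite, sum_const_zero, sum_const, add_zero, nsmul_eq_mul]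
  rw [filter_ne', card_erase_of_mem (mem_univ _), card_univ, Nat.cast_sub Fintype.card_pos]
  rfl

end LinearEquation

lemma geom_sum_eq_zero_iff_pow_eq_one {R : Type*} [CommRing R] [IsDomain R] {x : R} {k : ℕ}
    (hk : (k : R) ≠ 0) : ∑ i ∈ range k, x ^ i = 0 ↔ x ^ k = 1 ∧ x ≠ 1 := by
  by_cases hx : x = 1
  · simp [hx, hk]
  · rw [← mul_left_inj' (sub_ne_zero.mpr hx), geom_sum_mul, zero_mul, sub_eq_zero]
    exact (and_iff_left hx).symm

section FiniteField

variable {F : Type*} [Field F] [Fintype F]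

lemma natCast_ne_zero_of_dvd_card_sub_one {k : ℕ} (hk : k ∣ Fintype.card F - 1) :
    (k : F) ≠ 0 := by
  intro h0
  have hunit := Nat.cast_dvd_cast (α := F) hk
  rw [h0, zero_dvd_iff, Nat.cast_sub Fintype.card_pos, FiniteField.cast_card_eq_zero] at hunit
  simp at hunit

lemma card_nthRootsFinset_one_of_dvd {k : ℕ} (hk : k ∣ Fintype.card F - 1) :
    #(nthRootsFinset k (1 : F)) = k := by
  obtain ⟨g, hg⟩ := IsCyclic.exists_ofOrder_eq_natCard (α := Fˣ)
  rw [Nat.card_units, Nat.card_eq_fintype_card] at hg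
  have hprim : IsPrimitiveRoot (g : F) (Fintype.card F - 1) := by
    rw [IsPrimitiveRoot.coe_units_iff, ← hg]
    exact IsPrimitiveRoot.orderOf g
  have hpos : 0 < Fintype.card F - 1 := Nat.sub_pos_of_lt Fintype.one_lt_card
  obtain ⟨c, hc⟩ := hk
  exact (hprim.pow hpos (by rw [hc, mul_comm])).card_nthRootsFinset

variable [DecidableEq F]

lemma card_nthRootsFinset_mul_sdiff_union {m n : ℕ} (hm : 0 < m) (hn : 0 < n)
    (hmn : m.Coprime n) (hdvd : m * n ∣ Fintype.card F - 1) :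
    (#(nthRootsFinset (m * n) (1 : F) \ (nthRootsFinset m 1 ∪ nthRootsFinset n 1)) : ℤ)
      = m * n - m - n + 1 := by
  have hsub : nthRootsFinset m (1 : F) ∪ nthRootsFinset n 1 ⊆ nthRootsFinset (m * n) 1 := by
    intro t ht
    rw [mem_union, mem_nthRootsFinset hm, mem_nthRootsFinset hn] at ht
    rw [mem_nthRootsFinset (Nat.mul_pos hm hn)]
    rcases ht with ht | ht
    · rw [pow_mul, ht, one_pow]
    · rw [pow_mul', ht, one_pow]
  have hinter : nthRootsFinset m (1 : F) ∩ nthRootsFinset n 1 = {1} := by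
    ext t
    rw [mem_inter, mem_nthRootsFinset hm, mem_nthRootsFinset hn, mem_singleton,
      pow_eq_one_iff_of_coprime hmn]
  have hunion := card_union_add_card_inter (nthRootsFinset m (1 : F)) (nthRootsFinset n 1)
  rw [hinter, card_singleton, card_nthRootsFinset_one_of_dvd (dvd_of_mul_right_dvd hdvd),
    card_nthRootsFinset_one_of_dvd (dvd_of_mul_left_dvd hdvd)] at hunion
  rw [card_sdiff_of_subset hsub, Nat.cast_sub (card_le_card hsub),
    card_nthRootsFinset_one_of_dvd hdvd]
  push_cast
  linarith [congrArg (Nat.cast (R := ℤ)) hunion]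

lemma filter_geom_sum_pow_eq_zero_eq_sdiff {m n : ℕ} (hm : 0 < m) (hn : 0 < n)
    (hmF : (m : F) ≠ 0) (hnF : (n : F) ≠ 0) :
    ({t | t ≠ 0 ∧ ∑ i ∈ range n, (t ^ m) ^ i = 0 ∧ ∑ i ∈ range m, (t ^ n) ^ i = 0} : Finset F)
      = nthRootsFinset (m * n) 1 \ (nthRootsFinset m 1 ∪ nthRootsFinset n 1) := by
  ext t
  simp only [mem_filter, mem_univ, true_and, mem_sdiff, mem_union,
    mem_nthRootsFinset (Nat.mul_pos hm hn), mem_nthRootsFinset hm, mem_nthRootsFinset hn,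
    geom_sum_eq_zero_iff_pow_eq_one hmF, geom_sum_eq_zero_iff_pow_eq_one hnF]
  rw [← pow_mul, ← pow_mul, mul_comm n m]
  constructor
  · rintro ⟨-, ⟨hmn, hm1⟩, -, hn1⟩
    exact ⟨hmn, by tauto⟩
  · rintro ⟨hmn, hmn1⟩
    refine ⟨?_, ⟨hmn, fun h => hmn1 (Or.inl h)⟩, hmn, fun h => hmn1 (Or.inr h)⟩
    rintro rfl
    simp [zero_pow (Nat.mul_pos hm hn).ne'] at hmn

end FiniteField

theorem agl1_point_count (m n : ℕ) (hm : 0 < m) (hn : 0 < n) (h : Nat.Coprime m n)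
    (F : Type) [Field F] [Fintype F] (q : ℕ) (hq : Fintype.card F = q)
    (hroots : q ≡ 1 [MOD m * n]) :
    (Nat.card {p : F × F × F // p.1 ≠ 0 ∧
        (∑ i ∈ range n, (p.1 ^ m) ^ i) * p.2.1
          = (∑ i ∈ range m, (p.1 ^ n) ^ i) * p.2.2} : ℤ)
      = ((m : ℤ) * n - m - n + 2) * ((q : ℤ) ^ 2 - q) := by
  classical
  subst hq
  have hdvd : m * n ∣ Fintype.card F - 1 :=
    (Nat.modEq_iff_dvd' Fintype.card_pos).mp hroots.symm
  have hmF : (m : F) ≠ 0 := natCast_ne_zero_of_dvd_card_sub_one (dvd_of_mul_right_dvd hdvd)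
  have hnF : (n : F) ≠ 0 := natCast_ne_zero_of_dvd_card_sub_one (dvd_of_mul_left_dvd hdvd)
  rw [natCard_nonzero_linear_family (fun t => ∑ i ∈ range n, (t ^ m) ^ i)
      (fun t => ∑ i ∈ range m, (t ^ n) ^ i), filter_geom_sum_pow_eq_zero_eq_sdiff hm hn hmF hnF,
    card_nthRootsFinset_mul_sdiff_union hm hn h hdvd]
  ring
end

section
/- Let Γ be a finitely presented group and r ≥ 1. Every AGL_r(ℂ)-invariant regular function f on the representation variety Hom(Γ, AGL_r(ℂ)) satisfies f(ρ) = f(ρ₀), where ρ₀ is the composition of ρ with the projection AGL_r(ℂ) → GL_r(ℂ) (the vectorial part, included back into AGL_r(ℂ) with zero translation part). Consequently, restriction gives an isomorphism between the AGL_r(ℂ)-invariant functions on Hom(Γ, AGL_r(ℂ)) and the GL_r(ℂ)-invariant functions on Hom(Γ, GL_r(ℂ)). -/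
/-- The inclusion of linear automorphisms into affine automorphisms, as a group
homomorphism (vectorial part with zero translation). -/
noncomputable def linToAff (r : ℕ) :
    ((Fin r → ℂ) ≃ₗ[ℂ] (Fin r → ℂ)) →* ((Fin r → ℂ) ≃ᵃ[ℂ] (Fin r → ℂ)) where
  toFun e := e.toAffineEquiv
  map_one' := by ext x; rfl
  map_mul' := by intro e f; ext x; rfl

/-- `f` is a regular function on the `AGL_r(ℂ)`-representation variety: it is a
polynomial in the matrix entries of the linear parts and in the translation parts
of the images of finitely many group elements. -/
def RegAff (r : ℕ) (Γ : Type) [Group Γ]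
    (f : (Γ →* ((Fin r → ℂ) ≃ᵃ[ℂ] (Fin r → ℂ))) → ℂ) : Prop :=
  ∃ (k : ℕ) (γs : Fin k → Γ)
    (p : MvPolynomial (Fin k × ((Fin r × Fin r) ⊕ Fin r)) ℂ),
    ∀ ρ, f ρ = MvPolynomial.eval (fun v => Sum.elim
      (fun ij => LinearMap.toMatrix'
        (((ρ (γs v.1)).linear : (Fin r → ℂ) ≃ₗ[ℂ] (Fin r → ℂ)) :
          (Fin r → ℂ) →ₗ[ℂ] (Fin r → ℂ)) ij.1 ij.2)
      (fun j => (ρ (γs v.1)) 0 j) v.2) p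

/-- `f` is invariant under the conjugation action of `AGL_r(ℂ)`. -/
def InvAff (r : ℕ) (Γ : Type) [Group Γ]
    (f : (Γ →* ((Fin r → ℂ) ≃ᵃ[ℂ] (Fin r → ℂ))) → ℂ) : Prop :=
  ∀ (g : (Fin r → ℂ) ≃ᵃ[ℂ] (Fin r → ℂ)) ρ,
    f ((MulAut.conj g).toMonoidHom.comp ρ) = f ρ

/-- `g` is a regular function on the `GL_r(ℂ)`-representation variety. -/
def RegLin (r : ℕ) (Γ : Type) [Group Γ]
    (g : (Γ →* ((Fin r → ℂ) ≃ₗ[ℂ] (Fin r → ℂ))) → ℂ) : Prop :=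
  ∃ (k : ℕ) (γs : Fin k → Γ) (p : MvPolynomial (Fin k × (Fin r × Fin r)) ℂ),
    ∀ σ, g σ = MvPolynomial.eval (fun v => LinearMap.toMatrix'
      ((σ (γs v.1) : (Fin r → ℂ) ≃ₗ[ℂ] (Fin r → ℂ)) :
        (Fin r → ℂ) →ₗ[ℂ] (Fin r → ℂ)) v.2.1 v.2.2) p

/-- `g` is invariant under the conjugation action of `GL_r(ℂ)`. -/
def InvLin (r : ℕ) (Γ : Type) [Group Γ]
    (g : (Γ →* ((Fin r → ℂ) ≃ₗ[ℂ] (Fin r → ℂ))) → ℂ) : Prop :=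
  ∀ (h : (Fin r → ℂ) ≃ₗ[ℂ] (Fin r → ℂ)) σ,
    g ((MulAut.conj h).toMonoidHom.comp σ) = g σ

/-- Restriction of a function on the `AGL_r`-representation variety to the
`GL_r`-representation variety. -/
noncomputable def res (r : ℕ) (Γ : Type) [Group Γ]
    (f : (Γ →* ((Fin r → ℂ) ≃ᵃ[ℂ] (Fin r → ℂ))) → ℂ) :
    (Γ →* ((Fin r → ℂ) ≃ₗ[ℂ] (Fin r → ℂ))) → ℂ :=
  fun σ => f ((linToAff r).comp σ)

/-!
Conjugating `ρ` by the homothety `x ↦ c • x` fixes the linear parts of all `ρ γ` and multiplies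
their translation parts by `c`. So the coordinates of the conjugated representations run along
the line through those of `ρ₀` and `ρ`, parametrised by `c ≠ 0`. An invariant regular function
is a polynomial in these coordinates which is constant on this punctured line, hence, by
continuity, also at `c = 0`, i.e. at `ρ₀`. The restriction to `Hom(Γ, GL_r)` is therefore
injective, and `g ↦ g ∘ (linear part)` inverts it.
-/

open MvPolynomial Filter Topology

theorem AffineEquiv.linear_homothetyUnitsMulHom_apply {k V P : Type*} [CommRing k]
    [AddCommGroup V] [Module k V] [AddTorsor V P] (p : P) (c : kˣ) (v : V) :
    (homothetyUnitsMulHom p c).linear v = (c : k) • v :=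
  congrArg (· v) (AffineMap.homothety_linear p (c : k))

theorem AffineEquiv.linear_conj_homothety {k V P : Type*} [CommRing k] [AddCommGroup V]
    [Module k V] [AddTorsor V P] (p : P) (c : kˣ) (e : P ≃ᵃ[k] P) :
    (MulAut.conj (homothetyUnitsMulHom p c) e).linear = e.linear := by
  ext v
  rw [MulAut.conj_apply, ← (homothetyUnitsMulHom p).map_inv, ← AffineEquiv.linearHom_apply,
    map_mul, map_mul]
  simp [linear_homothetyUnitsMulHom_apply, -map_inv, smul_smul]

theorem AffineEquiv.conj_homothety_zero_apply_zero {k V : Type*} [CommRing k] [AddCommGroup V]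
    [Module k V] (c : kˣ) (e : V ≃ᵃ[k] V) :
    MulAut.conj (homothetyUnitsMulHom 0 c) e 0 = c • e 0 := by
  rw [MulAut.conj_apply, ← (homothetyUnitsMulHom (0 : V)).map_inv]
  simp [AffineEquiv.mul_def, AffineMap.homothety_apply, Units.smul_def, -map_inv]

theorem MvPolynomial.eval_eq_of_forall_ne_zero_eval_add_smul_eq {K σ : Type*} [Field K]
    [TopologicalSpace K] [IsTopologicalRing K] [T2Space K] [NeBot (𝓝[≠] (0 : K))]
    (p : MvPolynomial σ K) (x y : σ → K) (z : K)
    (h : ∀ c : K, c ≠ 0 → eval (x + c • y) p = z) : eval x p = z := by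
  have hcont : Continuous fun c : K => eval (x + c • y) p :=
    (continuous_eval p).comp (by fun_prop)
  simpa using congrFun (hcont.ext_on (dense_compl_singleton 0) continuous_const h) 0

theorem MonoidHom.comp_conj {G H : Type*} [Group G] [Group H] (φ : G →* H) (g : G) :
    φ.comp (MulAut.conj g).toMonoidHom = (MulAut.conj (φ g)).toMonoidHom.comp φ := by
  ext x
  simp

/-- `InvAff` and `InvLin` are this predicate for `H = AGL_r(ℂ)` and `H = GL_r(ℂ)`. -/
def ConjInvariant {α Γ H : Type*} [Group Γ] [Group H] (f : (Γ →* H) → α) : Prop :=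
  ∀ (h : H) ρ, f ((MulAut.conj h).toMonoidHom.comp ρ) = f ρ

theorem ConjInvariant.comp {α Γ G H : Type*} [Group Γ] [Group G] [Group H]
    {f : (Γ →* H) → α} (hf : ConjInvariant f) (φ : G →* H) :
    ConjInvariant fun σ : Γ →* G => f (φ.comp σ) := by
  intro g σ
  show f (φ.comp _) = f (φ.comp σ)
  rw [← MonoidHom.comp_assoc, φ.comp_conj, MonoidHom.comp_assoc, hf]

@[simp]
theorem LinearEquiv.linear_toAffineEquiv {k V₁ V₂ : Type*} [Ring k] [AddCommGroup V₁]
    [Module k V₁] [AddCommGroup V₂] [Module k V₂] (e : V₁ ≃ₗ[k] V₂) :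
    e.toAffineEquiv.linear = e :=
  rfl

section RepresentationVariety

variable {r : ℕ} {Γ : Type} [Group Γ]

/-- The coordinates in which `RegAff` asks for a polynomial: matrix entries and translation
parts of the `ρ (γs i)`. -/
noncomputable def affCoords {k : ℕ} (γs : Fin k → Γ)
    (ρ : Γ →* ((Fin r → ℂ) ≃ᵃ[ℂ] (Fin r → ℂ))) : Fin k × ((Fin r × Fin r) ⊕ Fin r) → ℂ :=
  fun v => Sum.elim
    (fun ij => LinearMap.toMatrix'
      (((ρ (γs v.1)).linear : (Fin r → ℂ) ≃ₗ[ℂ] (Fin r → ℂ)) :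
        (Fin r → ℂ) →ₗ[ℂ] (Fin r → ℂ)) ij.1 ij.2)
    (fun j => (ρ (γs v.1)) 0 j) v.2

theorem regAff_iff {f : (Γ →* ((Fin r → ℂ) ≃ᵃ[ℂ] (Fin r → ℂ))) → ℂ} :
    RegAff r Γ f ↔ ∃ (k : ℕ) (γs : Fin k → Γ)
      (p : MvPolynomial (Fin k × ((Fin r × Fin r) ⊕ Fin r)) ℂ),
      ∀ ρ, f ρ = eval (affCoords γs ρ) p :=
  Iff.rfl

theorem affCoords_conj_homothety {k : ℕ} (γs : Fin k → Γ)
    {ρ ρ₀ : Γ →* ((Fin r → ℂ) ≃ᵃ[ℂ] (Fin r → ℂ))}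
    (h0 : ∀ γ, ρ₀ γ = ((ρ γ).linear).toAffineEquiv) (c : ℂˣ) :
    affCoords γs ((MulAut.conj (AffineEquiv.homothetyUnitsMulHom 0 c)).toMonoidHom.comp ρ)
      = affCoords γs ρ₀ + (c : ℂ) • (affCoords γs ρ - affCoords γs ρ₀) := by
  funext v
  rcases v with ⟨i, ij | j⟩
  all_goals simp only [affCoords, Pi.add_apply, Pi.smul_apply, Pi.sub_apply,
    MonoidHom.comp_apply, MulEquiv.coe_toMonoidHom, AffineEquiv.linear_conj_homothety,
    AffineEquiv.conj_homothety_zero_apply_zero]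
  · simp [h0]
  · simp [h0, Units.smul_def]

theorem RegAff.apply_eq_of_linear {f : (Γ →* ((Fin r → ℂ) ≃ᵃ[ℂ] (Fin r → ℂ))) → ℂ}
    (hf : RegAff r Γ f) (hinv : InvAff r Γ f) {ρ ρ₀ : Γ →* ((Fin r → ℂ) ≃ᵃ[ℂ] (Fin r → ℂ))}
    (h0 : ∀ γ, ρ₀ γ = ((ρ γ).linear).toAffineEquiv) : f ρ = f ρ₀ := by
  obtain ⟨k, γs, p, hp⟩ := regAff_iff.1 hf
  rw [hp ρ₀]
  refine (eval_eq_of_forall_ne_zero_eval_add_smul_eq p _ (affCoords γs ρ - affCoords γs ρ₀) _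
    fun c hc => ?_).symm
  rw [← Units.val_mk0 hc, ← affCoords_conj_homothety γs h0]
  exact (hp _).symm.trans (hinv _ ρ)

theorem RegAff.apply_eq_res {f : (Γ →* ((Fin r → ℂ) ≃ᵃ[ℂ] (Fin r → ℂ))) → ℂ}
    (hf : RegAff r Γ f) (hinv : InvAff r Γ f) (ρ : Γ →* ((Fin r → ℂ) ≃ᵃ[ℂ] (Fin r → ℂ))) :
    f ρ = res r Γ f (AffineEquiv.linearHom.comp ρ) :=
  hf.apply_eq_of_linear hinv fun _ => rfl

theorem RegAff.regLin_res {f : (Γ →* ((Fin r → ℂ) ≃ᵃ[ℂ] (Fin r → ℂ))) → ℂ}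
    (hf : RegAff r Γ f) : RegLin r Γ (res r Γ f) := by
  obtain ⟨k, γs, p, hp⟩ := regAff_iff.1 hf
  refine ⟨k, γs, bind₁ (fun v => Sum.elim (fun ij => X (v.1, ij)) 0 v.2) p, fun σ => ?_⟩
  refine (hp _).trans (.trans (congrArg (eval · p) (funext fun v => ?_))
    (eval₂Hom_bind₁ _ _ _ p).symm)
  rcases v with ⟨i, ij | j⟩ <;> simp [affCoords, linToAff]

theorem RegLin.comp_linearHom {g : (Γ →* ((Fin r → ℂ) ≃ₗ[ℂ] (Fin r → ℂ))) → ℂ}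
    (hg : RegLin r Γ g) : RegAff r Γ fun ρ => g (AffineEquiv.linearHom.comp ρ) := by
  obtain ⟨k, γs, q, hq⟩ := hg
  exact ⟨k, γs, rename (fun v => (v.1, Sum.inl v.2)) q,
    fun ρ => (hq _).trans (by rw [eval_rename]; rfl)⟩

end RepresentationVariety

theorem agl_invariant_functions_general (r : ℕ) (Γ : Type) [Group Γ] :
    (∀ f, RegAff r Γ f → InvAff r Γ f →
      ∀ ρ ρ₀ : Γ →* ((Fin r → ℂ) ≃ᵃ[ℂ] (Fin r → ℂ)),
        (∀ γ, ρ₀ γ = ((ρ γ).linear).toAffineEquiv) → f ρ = f ρ₀) ∧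
    (∀ f, RegAff r Γ f → InvAff r Γ f →
      RegLin r Γ (res r Γ f) ∧ InvLin r Γ (res r Γ f)) ∧
    (∀ g, RegLin r Γ g → InvLin r Γ g →
      ∃! f, (RegAff r Γ f ∧ InvAff r Γ f) ∧ res r Γ f = g) := by
  refine ⟨fun f hf hinv ρ ρ₀ h0 => hf.apply_eq_of_linear hinv h0,
    fun f hf hinv => ⟨hf.regLin_res, ConjInvariant.comp hinv (linToAff r)⟩,
    fun g hg hinv => ⟨_, ⟨⟨hg.comp_linearHom, ConjInvariant.comp hinv _⟩, rfl⟩,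
      ?_⟩⟩
  rintro f ⟨⟨hf, hfinv⟩, rfl⟩
  exact funext (hf.apply_eq_res hfinv)

theorem agl_invariant_functions (r : ℕ) (hr : 1 ≤ r) (Γ : Type) [Group Γ]
    (hΓ : Group.FG Γ) :
    (∀ f, RegAff r Γ f → InvAff r Γ f →
      ∀ ρ ρ₀ : Γ →* ((Fin r → ℂ) ≃ᵃ[ℂ] (Fin r → ℂ)),
        (∀ γ, ρ₀ γ = ((ρ γ).linear).toAffineEquiv) → f ρ = f ρ₀) ∧
    (∀ f, RegAff r Γ f → InvAff r Γ f →
      RegLin r Γ (res r Γ f) ∧ InvLin r Γ (res r Γ f)) ∧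
    (∀ g, RegLin r Γ g → InvLin r Γ g →
      ∃! f, (RegAff r Γ f ∧ InvAff r Γ f) ∧ res r Γ f = g) :=
  agl_invariant_functions_general r Γ
end
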